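/- Let n ≥ 1 and consider the classical Heisenberg vector fields on ℝ^{2n+1} given by X_j f = ∂f/∂x_j − (1/2) x_{j+n} ∂f/∂t for 1 ≤ j ≤ n and X_j f = ∂f/∂x_j + (1/2) x_{j−n} ∂f/∂t for n+1 ≤ j ≤ 2n (so that [X_j, X_{j+n}] = ∂/∂t and the frame is orthonormal). Define the Kaplan-type gauge ρ(x_1,…,x_{2n},t) = ( (Σ_{j=1}^{2n} x_j²)² + 16 t² )^{1/4}. Then ρ satisfies the infinite Laplace equation Δ_∞ ρ = Σ_{i=1}^{2n} Σ_{j=1}^{2n} X_i(X_j ρ) · X_i ρ · X_j ρ = 0 at every point of ℝ^{2n+1} \ {0}. -/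

import Mathlib

/-!
Write `ρ = U ^ (1/4)` with `U = |x|⁴ + 16 t²`. For vector fields `X_j` and `u > 0` the chain rule
gives `Δ_∞ (u ^ p) = p³ u^(3p-4) (u Δ_∞ u + (p - 1) |Xu|⁴)`, where `|Xu|² = ∑ (X_j u)²`.
Writing `X_j = ∂_j + a_j ∂_t` (`a_j = tCoeff n j`), one has `X_j U = 4 (|x|² x_j + 8 t a_j)`,
and the symplectic identities `∑ x_j a_j = 0`, `∑ a_j² = |x|²/4` and the antisymmetry of `X_i a_j`
give `|XU|² = 16 |x|² U` and `Δ_∞ U = 192 |x|⁴ U`. At `p = 1/4` the bracket is `(192 - (3/4) · 256) |x|⁴ U² = 0`.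
-/

/-- Partial derivative of `f : ℝ^m → ℝ` in the `i`-th coordinate direction. -/
noncomputable def pderiv' {m : ℕ} (i : Fin m) (f : (Fin m → ℝ) → ℝ) (q : Fin m → ℝ) : ℝ :=
  fderiv ℝ f q (Pi.single i 1)

/-- The classical Heisenberg vector fields on ℝ^{2n+1}:
`X_j f = ∂f/∂x_j − (1/2) x_{j+n} ∂f/∂t` for `1 ≤ j ≤ n`, and
`X_j f = ∂f/∂x_j + (1/2) x_{j−n} ∂f/∂t` for `n+1 ≤ j ≤ 2n`. -/
noncomputable def Xh (n : ℕ) (j : Fin (2*n))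
    (f : (Fin (2*n+1) → ℝ) → ℝ) (q : Fin (2*n+1) → ℝ) : ℝ :=
  pderiv' ⟨(j : ℕ), by have := j.isLt; omega⟩ f q +
    (if h : (j : ℕ) < n then
        -(1/2) * q ⟨(j : ℕ) + n, by have := j.isLt; omega⟩
      else
        (1/2) * q ⟨(j : ℕ) - n, by have := j.isLt; omega⟩) *
      pderiv' ⟨2*n, by omega⟩ f q

/-- The Kaplan-type gauge `ρ = ((Σ_{j=1}^{2n} x_j²)² + 16 t²)^{1/4}`. -/
noncomputable def rhoH (n : ℕ) (q : Fin (2*n+1) → ℝ) : ℝ :=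
  ((∑ j : Fin (2*n), (q ⟨(j : ℕ), by have := j.isLt; omega⟩)^2)^2
    + 16 * (q ⟨2*n, by omega⟩)^2) ^ ((1:ℝ)/4)

open Finset Filter Topology

section VectorField

variable {E : Type*} [NormedAddCommGroup E] [NormedSpace ℝ E]

noncomputable def derivAlong (V : E → E) (f : E → ℝ) (q : E) : ℝ := fderiv ℝ f q (V q)

noncomputable def infLaplacian {ι : Type*} [Fintype ι] (V : ι → E → E) (f : E → ℝ) (q : E) :
    ℝ :=
  ∑ i, ∑ j, derivAlong (V i) (derivAlong (V j) f) q * derivAlong (V i) f q * derivAlong (V j) f q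

variable {V W : E → E} {f g u : E → ℝ} {φ : ℝ → ℝ} {q : E}

theorem Filter.EventuallyEq.derivAlong_eq (h : f =ᶠ[𝓝 q] g) :
    derivAlong V f q = derivAlong V g q := by
  rw [derivAlong, derivAlong, h.fderiv_eq]

theorem derivAlong_mul (hf : DifferentiableAt ℝ f q) (hg : DifferentiableAt ℝ g q) :
    derivAlong V (f * g) q = derivAlong V f q * g q + f q * derivAlong V g q := by
  simp only [derivAlong, fderiv_mul hf hg, add_apply, smul_apply, smul_eq_mul]
  ring

theorem derivAlong_comp (hφ : DifferentiableAt ℝ φ (u q)) (hu : DifferentiableAt ℝ u q) :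
    derivAlong V (φ ∘ u) q = deriv φ (u q) * derivAlong V u q := by
  simp [derivAlong, (hφ.hasDerivAt.comp_hasFDerivAt q hu.hasFDerivAt).fderiv]

theorem derivAlong_derivAlong_comp (hφ : ∀ᶠ y in 𝓝 q, DifferentiableAt ℝ φ (u y))
    (hu : ∀ᶠ y in 𝓝 q, DifferentiableAt ℝ u y) (hφ' : DifferentiableAt ℝ (deriv φ) (u q))
    (hVu : DifferentiableAt ℝ (derivAlong V u) q) :
    derivAlong W (derivAlong V (φ ∘ u)) q =
      deriv (deriv φ) (u q) * derivAlong W u q * derivAlong V u q +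
        deriv φ (u q) * derivAlong W (derivAlong V u) q := by
  have hchain : derivAlong V (φ ∘ u) =ᶠ[𝓝 q] (deriv φ ∘ u) * derivAlong V u :=
    (hφ.and hu).mono fun y hy => derivAlong_comp hy.1 hy.2
  rw [hchain.derivAlong_eq, derivAlong_mul (hφ'.comp q hu.self_of_nhds) hVu,
    derivAlong_comp hφ' hu.self_of_nhds]
  rfl

theorem infLaplacian_comp {ι : Type*} [Fintype ι] {V : ι → E → E}
    (hφ : ∀ᶠ y in 𝓝 q, DifferentiableAt ℝ φ (u y))
    (hu : ∀ᶠ y in 𝓝 q, DifferentiableAt ℝ u y) (hφ' : DifferentiableAt ℝ (deriv φ) (u q))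
    (hVu : ∀ j, DifferentiableAt ℝ (derivAlong (V j) u) q) :
    infLaplacian V (φ ∘ u) q =
      deriv φ (u q) ^ 3 * infLaplacian V u q +
        deriv (deriv φ) (u q) * deriv φ (u q) ^ 2 * (∑ i, derivAlong (V i) u q ^ 2) ^ 2 := by
  simp only [infLaplacian, derivAlong_derivAlong_comp hφ hu hφ' (hVu _),
    derivAlong_comp hφ.self_of_nhds hu.self_of_nhds]
  rw [sq (∑ i, _), sum_mul_sum, mul_sum, mul_sum, ← sum_add_distrib]
  refine sum_congr rfl fun i _ => ?_
  rw [mul_sum, mul_sum, ← sum_add_distrib]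
  refine sum_congr rfl fun j _ => ?_
  ring

theorem infLaplacian_rpow_comp {ι : Type*} [Fintype ι] {V : ι → E → E} (p : ℝ)
    (hq : 0 < u q) (hu : ∀ᶠ y in 𝓝 q, DifferentiableAt ℝ u y)
    (hVu : ∀ j, DifferentiableAt ℝ (derivAlong (V j) u) q) :
    infLaplacian V ((· ^ p) ∘ u) q =
      (p * u q ^ (p - 1)) ^ 3 * infLaplacian V u q +
        p * (p - 1) * u q ^ (p - 1 - 1) * (p * u q ^ (p - 1)) ^ 2 *
          (∑ i, derivAlong (V i) u q ^ 2) ^ 2 := by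
  have hpos : ∀ᶠ y in 𝓝 q, 0 < u y :=
    hu.self_of_nhds.continuousAt.eventually (lt_mem_nhds hq)
  have hφ : ∀ᶠ y in 𝓝 q, DifferentiableAt ℝ (· ^ p) (u y) :=
    hpos.mono fun y hy => Real.differentiableAt_rpow_const_of_ne p hy.ne'
  have hφ' : DifferentiableAt ℝ (deriv (· ^ p)) (u q) := by
    rw [Real.deriv_rpow_const']
    exact (Real.differentiableAt_rpow_const_of_ne _ hq.ne').const_mul p
  rw [infLaplacian_comp hφ hu hφ' hVu]
  simp only [Real.deriv_rpow_const', deriv_const_mul_field']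
  ring

end VectorField

theorem fderiv_eval_apply {ι : Type*} [Fintype ι] (k : ι) (q v : ι → ℝ) :
    fderiv ℝ (fun y : ι → ℝ => y k) q v = v k := by
  rw [(hasFDerivAt_apply k q).fderiv]
  rfl

theorem Fin.sum_univ_two_mul {M : Type*} [AddCommMonoid M] {n : ℕ} (f : Fin (2*n) → M) :
    ∑ j, f j = ∑ i : Fin n, (f ⟨i, by omega⟩ + f ⟨i + n, by omega⟩) := by
  rw [← Fin.sum_congr' f (two_mul n).symm, Fin.sum_univ_add, ← sum_add_distrib]
  refine sum_congr rfl fun i _ => congrArg₂ _ rfl (congrArg f (Fin.ext ?_))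
  simp [add_comm]

namespace Heisenberg

variable (n : ℕ)

noncomputable def tCoeff (j : Fin (2*n)) : (Fin (2*n+1) → ℝ) →L[ℝ] ℝ :=
  if h : (j : ℕ) < n then (-(1/2) : ℝ) • ContinuousLinearMap.proj ⟨j + n, by omega⟩
  else (1/2 : ℝ) • ContinuousLinearMap.proj ⟨j - n, by omega⟩

noncomputable def frame (j : Fin (2*n)) (q : Fin (2*n+1) → ℝ) : Fin (2*n+1) → ℝ :=
  Pi.single j.castSucc 1 + tCoeff n j q • Pi.single (Fin.last _) 1

noncomputable def horizSq (q : Fin (2*n+1) → ℝ) : ℝ := ∑ j : Fin (2*n), q j.castSucc ^ 2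

noncomputable def quarticGauge (q : Fin (2*n+1) → ℝ) : ℝ :=
  horizSq n q ^ 2 + 16 * q (Fin.last _) ^ 2

noncomputable def gaugeGrad (j : Fin (2*n)) (q : Fin (2*n+1) → ℝ) : ℝ :=
  horizSq n q * q j.castSucc + 8 * q (Fin.last _) * tCoeff n j q

theorem rhoH_eq_rpow_comp : rhoH n = (· ^ (1/4 : ℝ)) ∘ quarticGauge n := rfl

theorem Xh_eq_derivAlong_frame (j : Fin (2*n)) : Xh n j = derivAlong (frame n j) := by
  ext f q
  have hcoeff : (if h : (j : ℕ) < n then -(1/2) * q ⟨(j : ℕ) + n, by omega⟩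
      else (1/2) * q ⟨(j : ℕ) - n, by omega⟩) = tCoeff n j q := by
    unfold tCoeff
    split_ifs <;> simp
  rw [Xh, hcoeff]
  simp [derivAlong, frame, pderiv']
  rfl

variable {n}

theorem tCoeff_castAdd (i : Fin n) (q : Fin (2*n+1) → ℝ) :
    tCoeff n ⟨i, by omega⟩ q = -(1/2) * q (⟨i + n, by omega⟩ : Fin (2*n)).castSucc := by
  simp [tCoeff]

theorem tCoeff_natAdd (i : Fin n) (q : Fin (2*n+1) → ℝ) :
    tCoeff n ⟨i + n, by omega⟩ q = (1/2) * q (⟨i, by omega⟩ : Fin (2*n)).castSucc := by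
  simp [tCoeff]

theorem frame_castSucc (i k : Fin (2*n)) (q : Fin (2*n+1) → ℝ) :
    frame n i q k.castSucc = if k = i then 1 else 0 := by
  simp [frame, Pi.single_apply, Fin.castSucc_ne_last]

theorem frame_last (i : Fin (2*n)) (q : Fin (2*n+1) → ℝ) :
    frame n i q (Fin.last _) = tCoeff n i q := by
  simp [frame, (Fin.castSucc_ne_last _).symm]

theorem sum_mul_tCoeff_self (y : Fin (2*n+1) → ℝ) :
    ∑ j : Fin (2*n), y j.castSucc * tCoeff n j y = 0 := by
  rw [Fin.sum_univ_two_mul]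
  refine sum_eq_zero fun i _ => ?_
  rw [tCoeff_castAdd, tCoeff_natAdd]
  ring

theorem sum_tCoeff_sq (y : Fin (2*n+1) → ℝ) :
    ∑ j : Fin (2*n), tCoeff n j y ^ 2 = horizSq n y / 4 := by
  rw [horizSq, sum_div, Fin.sum_univ_two_mul, Fin.sum_univ_two_mul]
  refine sum_congr rfl fun i _ => ?_
  rw [tCoeff_castAdd, tCoeff_natAdd]
  ring

@[fun_prop]
theorem differentiable_horizSq : Differentiable ℝ (horizSq n) := by
  unfold horizSq
  fun_prop

theorem fderiv_horizSq (q v : Fin (2*n+1) → ℝ) :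
    fderiv ℝ (horizSq n) q v = 2 * ∑ j : Fin (2*n), q j.castSucc * v j.castSucc := by
  unfold horizSq
  simp (disch := fun_prop) [fderiv_fun_sum, fderiv_fun_pow, fderiv_eval_apply, mul_sum, mul_assoc]

theorem derivAlong_frame_quarticGauge (j : Fin (2*n)) :
    derivAlong (frame n j) (quarticGauge n) = fun q => 4 * gaugeGrad n j q := by
  ext q
  delta derivAlong quarticGauge gaugeGrad
  simp (disch := fun_prop) [fderiv_fun_add, fderiv_fun_mul, fderiv_fun_pow, fderiv_horizSq,
    fderiv_eval_apply, frame_castSucc, frame_last]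
  ring

theorem derivAlong_frame_derivAlong_frame_quarticGauge (i j : Fin (2*n))
    (q : Fin (2*n+1) → ℝ) :
    derivAlong (frame n i) (derivAlong (frame n j) (quarticGauge n)) q =
      4 * (2 * q i.castSucc * q j.castSucc + (if j = i then horizSq n q else 0) +
        8 * tCoeff n i q * tCoeff n j q + 8 * q (Fin.last _) * tCoeff n j (frame n i q)) := by
  rw [derivAlong_frame_quarticGauge]
  delta derivAlong gaugeGrad
  simp (disch := fun_prop) [fderiv_fun_add, fderiv_fun_mul, fderiv_horizSq, fderiv_eval_apply,
    frame_castSucc, frame_last]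
  split_ifs <;> ring

variable (q : Fin (2*n+1) → ℝ)

theorem sum_coord_mul_gaugeGrad :
    ∑ j, q j.castSucc * gaugeGrad n j q = horizSq n q ^ 2 := by
  have expand : ∀ j, q j.castSucc * gaugeGrad n j q =
      horizSq n q * q j.castSucc ^ 2 + 8 * q (Fin.last _) * (q j.castSucc * tCoeff n j q) :=
    fun j => by unfold gaugeGrad; ring
  rw [sum_congr rfl fun j _ => expand j, sum_add_distrib, ← mul_sum, ← mul_sum,
    sum_mul_tCoeff_self, ← horizSq]
  ring

theorem sum_tCoeff_mul_gaugeGrad :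
    ∑ j, tCoeff n j q * gaugeGrad n j q = 2 * q (Fin.last _) * horizSq n q := by
  have expand : ∀ j, tCoeff n j q * gaugeGrad n j q =
      horizSq n q * (q j.castSucc * tCoeff n j q) + 8 * q (Fin.last _) * tCoeff n j q ^ 2 :=
    fun j => by unfold gaugeGrad; ring
  rw [sum_congr rfl fun j _ => expand j, sum_add_distrib, ← mul_sum, ← mul_sum,
    sum_mul_tCoeff_self, sum_tCoeff_sq]
  ring

theorem sum_gaugeGrad_sq : ∑ j, gaugeGrad n j q ^ 2 = horizSq n q * quarticGauge n q := by
  have expand : ∀ j, gaugeGrad n j q ^ 2 = horizSq n q * (q j.castSucc * gaugeGrad n j q) +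
      8 * q (Fin.last _) * (tCoeff n j q * gaugeGrad n j q) :=
    fun j => by unfold gaugeGrad; ring
  rw [sum_congr rfl fun j _ => expand j, sum_add_distrib, ← mul_sum, ← mul_sum,
    sum_coord_mul_gaugeGrad, sum_tCoeff_mul_gaugeGrad, quarticGauge]
  ring

-- `tCoeff n j (frame n i q) = X_i a_j` is antisymmetric in `i, j`.
theorem sum_sum_tCoeff_frame_mul (a : Fin (2*n) → ℝ) :
    ∑ i, ∑ j, tCoeff n j (frame n i q) * (a i * a j) = 0 := by
  set y := ∑ i, a i • frame n i q
  have hy : ∀ k, y k.castSucc = a k := fun k => by simp [y, frame_castSucc]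
  calc ∑ i, ∑ j, tCoeff n j (frame n i q) * (a i * a j)
      = ∑ j, y j.castSucc * tCoeff n j y := by
        rw [sum_comm]
        refine sum_congr rfl fun j _ => ?_
        simp only [hy, y, map_sum, map_smul, smul_eq_mul, mul_sum]
        exact sum_congr rfl fun i _ => by ring
    _ = 0 := sum_mul_tCoeff_self y

theorem sum_derivAlong_frame_quarticGauge_sq :
    ∑ j, derivAlong (frame n j) (quarticGauge n) q ^ 2 = 16 * horizSq n q * quarticGauge n q := by
  simp only [derivAlong_frame_quarticGauge, mul_pow, ← mul_sum, sum_gaugeGrad_sq]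
  ring

theorem infLaplacian_quarticGauge :
    infLaplacian (frame n) (quarticGauge n) q = 192 * horizSq n q ^ 2 * quarticGauge n q := by
  have hterm : ∀ i j, 4 * (2 * q i.castSucc * q j.castSucc + (if j = i then horizSq n q else 0) +
        8 * tCoeff n i q * tCoeff n j q + 8 * q (Fin.last _) * tCoeff n j (frame n i q)) *
        (4 * gaugeGrad n i q) * (4 * gaugeGrad n j q) =
      128 * (q i.castSucc * gaugeGrad n i q * (q j.castSucc * gaugeGrad n j q)) +
        512 * (tCoeff n i q * gaugeGrad n i q * (tCoeff n j q * gaugeGrad n j q)) +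
        512 * q (Fin.last _) * (tCoeff n j (frame n i q) * (gaugeGrad n i q * gaugeGrad n j q)) +
        (if j = i then 64 * horizSq n q * gaugeGrad n i q ^ 2 else 0) := by
    intro i j
    split_ifs with h
    · subst h; ring
    · ring
  simp only [infLaplacian, derivAlong_frame_derivAlong_frame_quarticGauge]
  simp only [derivAlong_frame_quarticGauge]
  rw [sum_congr rfl fun i _ => sum_congr rfl fun j _ => hterm i j]
  simp only [sum_add_distrib, sum_ite_eq', mem_univ, if_true, ← mul_sum, ← sum_mul,
    sum_sum_tCoeff_frame_mul]
  rw [sum_coord_mul_gaugeGrad, sum_tCoeff_mul_gaugeGrad, sum_gaugeGrad_sq, quarticGauge]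
  ring

theorem quarticGauge_pos {q : Fin (2*n+1) → ℝ} (hq : q ≠ 0) : 0 < quarticGauge n q := by
  obtain ⟨k, hk⟩ := Function.ne_iff.mp hq
  induction k using Fin.lastCases with
  | last =>
    have : 0 < q (Fin.last _) ^ 2 := sq_pos_iff.mpr hk
    unfold quarticGauge
    positivity
  | cast j =>
    have : 0 < horizSq n q :=
      (sq_pos_iff.mpr hk).trans_le
        (single_le_sum (fun i _ => sq_nonneg (q i.castSucc)) (mem_univ j))
    unfold quarticGauge
    positivity

end Heisenberg

open Heisenberg

theorem heisenberg_gauge_infinite_harmonic_general (n : ℕ) :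
    ∀ q : Fin (2*n+1) → ℝ, q ≠ 0 →
      ∑ i : Fin (2*n), ∑ j : Fin (2*n),
        Xh n i (Xh n j (rhoH n)) q * Xh n i (rhoH n) q * Xh n j (rhoH n) q = 0 := by
  intro q hq
  have hU := quarticGauge_pos hq
  have hdiff : ∀ᶠ y in 𝓝 q, DifferentiableAt ℝ (quarticGauge n) y :=
    Eventually.of_forall fun _ => by unfold quarticGauge; fun_prop
  have hdiff' : ∀ j, DifferentiableAt ℝ (derivAlong (frame n j) (quarticGauge n)) q := fun j => by
    rw [derivAlong_frame_quarticGauge]; unfold gaugeGrad; fun_prop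
  simp only [Xh_eq_derivAlong_frame]
  change infLaplacian (frame n) (rhoH n) q = 0
  rw [rhoH_eq_rpow_comp, infLaplacian_rpow_comp _ hU hdiff hdiff', infLaplacian_quarticGauge,
    sum_derivAlong_frame_quarticGauge_sq, Real.rpow_sub_one hU.ne' (1/4 - 1),
    Real.rpow_sub_one hU.ne' (1/4)]
  field_simp
  ring

theorem heisenberg_gauge_infinite_harmonic (n : ℕ) (hn : 1 ≤ n) :
    ∀ q : Fin (2*n+1) → ℝ, q ≠ 0 →
      ∑ i : Fin (2*n), ∑ j : Fin (2*n),
        Xh n i (Xh n j (rhoH n)) q * Xh n i (rhoH n) q * Xh n j (rhoH n) q = 0 :=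
  heisenberg_gauge_infinite_harmonic_general n
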